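/- arXiv:1705.06122 — 5 statements merged into one kernel-verified Lean document; each statement's English description precedes it below -/
import Mathlib

section
/- Let p be a prime. Define the height of a rational number r = m/n (in lowest terms, n > 0) as height(r) = |m| + |n|. Let α = (m₁ p^k)/m₂ with m₁, m₂ coprime integers not divisible by p and k ≥ 1 (so α ∈ pℤ_p ∩ ℚ, α ≠ 0). Let j = ω_p(−m₂/m₁) ∈ {0,…,p−1} and α₁ = (−m₂ − j m₁)/m₁. Then height(α₁) ≤ height(α), i.e., |−m₂ − j m₁| + |m₁| ≤ |m₁| p^k + |m₂|. -/
theorem abs_neg_sub_mul_add_abs_le {R : Type*} [CommRing R] [LinearOrder R] [IsOrderedRing R]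
    (a b : R) {j N : R} (hj : 0 ≤ j) (hjN : j + 1 ≤ N) :
    |-a - j * b| + |b| ≤ |b| * N + |a| :=
  calc |-a - j * b| + |b| ≤ |a| + j * |b| + |b| := by
        grw [abs_sub (-a), abs_neg, abs_mul, abs_of_nonneg hj]
    _ = |a| + (j + 1) * |b| := by ring
    _ ≤ |a| + N * |b| := by gcongr
    _ = |b| * N + |a| := by ring

theorem stmt_4_general (p : ℕ) (m₁ m₂ : ℤ) (k : ℕ) (hk : 1 ≤ k)
    (j : ℕ) (hj : j < p) :
    |(-m₂ - (j : ℤ) * m₁)| + |m₁| ≤ |m₁| * (p : ℤ) ^ k + |m₂| := by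
  have hjp : (j : ℤ) + 1 ≤ p := by exact_mod_cast hj
  have hp : (p : ℤ) ≤ (p : ℤ) ^ k := le_self_pow₀ (by omega) (by omega)
  exact abs_neg_sub_mul_add_abs_le m₂ m₁ (by positivity) (hjp.trans hp)

/-- Height does not increase under one step of the `Φ₀^{[-1]}` algorithm:
for `α = m₁p^k/m₂` and `j = ω_p(−m₂/m₁)`, the next remainder `α₁ = (−m₂ − j m₁)/m₁`
satisfies `|−m₂ − j m₁| + |m₁| ≤ |m₁| p^k + |m₂|`. -/
theorem stmt_4 (p : ℕ) [Fact p.Prime] (m₁ m₂ : ℤ) (k : ℕ) (hk : 1 ≤ k)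
    (hco : IsCoprime m₁ m₂) (h1 : ¬ (p : ℤ) ∣ m₁) (h2 : ¬ (p : ℤ) ∣ m₂)
    (j : ℕ) (hj : j < p)
    (hdig : ‖-(m₂ : ℚ_[p]) / (m₁ : ℚ_[p]) - (j : ℚ_[p])‖ < 1) :
    |(-m₂ - (j : ℤ) * m₁)| + |m₁| ≤ |m₁| * (p : ℤ) ^ k + |m₂| :=
  stmt_4_general p m₁ m₂ k hk j hj
end

section
/- Let p be a prime. Under the Φ₀^{[−1]} p-adic continued fraction algorithm (where for nonzero α ∈ pℤ_p one sets T(α) = −p^{ord_p(α)}/α − ω_p(−p^{ord_p(α)}/α), and T(0) = 0), every rational number α ∈ pℤ_p reaches 0 after finitely many iterations of T; i.e., every rational number has a finite Φ₀^{[−1]} continued fraction expansion. -/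
/-!
Write a rational `q ∈ pℤ_p \ {0}` as `q = p^k a / b` in lowest terms, with `k ≥ 1` and
`p ∤ b`. Then `T q = -(b + j a) / a` with `0 ≤ j < p`, so the height `|num| + den` of `T q` is
at most `|b + j a| + |a| ≤ b + p |a| ≤ height q`. If `q > 0` then `T q < 0`, and if `q < 0`
the inequality is strict. Hence the height drops strictly at least every two steps, and the
orbit must reach `0`.
-/

namespace PadicContinuedFraction

def height (q : ℚ) : ℕ := q.num.natAbs + q.den

lemma height_intCast_div_le (n d : ℤ) (hd : d ≠ 0) :
    height (n / d) ≤ n.natAbs + d.natAbs := by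
  obtain ⟨c, hcn, hcd⟩ := Rat.num_den_mk hd (Rat.divInt_eq_div n d).symm
  have hc : 1 ≤ c.natAbs := Int.natAbs_pos.mpr (left_ne_zero_of_mul (hcd ▸ hd))
  have hn : n.natAbs = c.natAbs * (n / d : ℚ).num.natAbs := by rw [← Int.natAbs_mul, ← hcn]
  have hd : d.natAbs = c.natAbs * (n / d : ℚ).den := by
    rw [← Int.natAbs_natCast (n / d : ℚ).den, ← Int.natAbs_mul, ← hcd]
  rw [height, hn, hd]
  exact add_le_add (Nat.le_mul_of_pos_left _ hc) (Nat.le_mul_of_pos_left _ hc)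

lemma abs_add_mul_add_abs_le {b : ℤ} (a : ℤ) {j p : ℕ} (hb : 0 ≤ b) (hj : j < p) :
    |b + j * a| + |a| ≤ b + p * |a| := by
  have hjp : (j : ℤ) + 1 ≤ p := by exact_mod_cast hj
  rcases le_or_gt 0 a with ha | ha
  · rw [abs_of_nonneg ha, abs_of_nonneg (by positivity)]
    nlinarith
  · rw [abs_of_neg ha]
    rcases le_or_gt 0 (b + j * a) with h | h
    · rw [abs_of_nonneg h]; nlinarith
    · rw [abs_of_neg h]; nlinarith

lemma abs_add_mul_add_abs_lt {b a : ℤ} {j p : ℕ} (hb : 0 < b) (ha : a < 0) (hp : 1 < p)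
    (hj : j < p) :
    |b + j * a| + |a| < b + p * |a| := by
  have hjp : (j : ℤ) + 1 ≤ p := by exact_mod_cast hj
  have hp : (1 : ℤ) < p := by exact_mod_cast hp
  rw [abs_of_neg ha]
  rcases le_or_gt 0 (b + j * a) with h | h
  · rw [abs_of_nonneg h]; nlinarith
  · rw [abs_of_neg h]; nlinarith

def step (p j : ℕ) (q : ℚ) : ℚ := -(p : ℚ) ^ padicValRat p q / q - j

variable {p : ℕ} [hp : Fact p.Prime]

lemma step_neg_of_pos {q : ℚ} (hq : 0 < q) (j : ℕ) : step p j q < 0 := by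
  have : 0 < (p : ℚ) ^ padicValRat p q / q :=
    div_pos (zpow_pos (by exact_mod_cast hp.out.pos) _) hq
  rw [step, neg_div]
  have : (0 : ℚ) ≤ j := j.cast_nonneg
  linarith

lemma padicValRat_pos_of_norm_lt_one {q : ℚ} (hq0 : q ≠ 0) (hq : ‖(q : ℚ_[p])‖ < 1) :
    0 < padicValRat p q := by
  rwa [Padic.norm_eq_zpow_neg_valuation (by exact_mod_cast hq0), Padic.valuation_ratCast,
    zpow_lt_one_iff_right₀ (by exact_mod_cast hp.out.one_lt), neg_lt_zero] at hq

lemma padicValRat_eq_padicValInt_num {q : ℚ} (hv : 0 < padicValRat p q) :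
    padicValRat p q = padicValInt p q.num := by
  rw [padicValRat_def] at hv ⊢
  have hnum : (p : ℤ) ∣ q.num := by
    simpa using ((padicValInt_dvd_iff 1 q.num).mpr (Or.inr (by omega)))
  have hden : ¬ p ∣ q.den := fun h =>
    hp.out.not_dvd_one (q.reduced ▸ Nat.dvd_gcd (Int.natCast_dvd.mp hnum) h)
  rw [padicValNat.eq_zero_of_not_dvd hden, Nat.cast_zero, sub_zero]

lemma exists_step_eq_div {q : ℚ} (hq0 : q ≠ 0) (hv : 0 < padicValRat p q) :
    ∃ a : ℤ, a ≠ 0 ∧ (q < 0 → a < 0) ∧ (q.den : ℤ) + p * |a| ≤ height q ∧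
      ∀ j : ℕ, step p j q = ((-(q.den + j * a) : ℤ) : ℚ) / a := by
  set k := padicValInt p q.num
  have hk : padicValRat p q = k := padicValRat_eq_padicValInt_num hv
  obtain ⟨a, ha⟩ := padicValInt_dvd (p := p) q.num
  have ha0 : a ≠ 0 := by rintro rfl; simp_all
  refine ⟨a, ha0, fun hq => ?_, ?_, fun j => ?_⟩
  · have := Rat.num_neg.mpr hq
    rw [ha] at this
    exact neg_of_mul_neg_right this (by positivity)
  · have hpk : (p : ℤ) ≤ p ^ k :=
      le_self_pow₀ (by exact_mod_cast hp.out.one_lt.le) (by omega)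
    rw [height, ha, Int.natAbs_mul]
    push_cast
    rw [abs_pow, Nat.abs_cast]
    nlinarith [abs_nonneg a]
  · rw [step, hk, zpow_natCast]
    conv_lhs => rw [← Rat.num_div_den q, ha]
    have : (q.den : ℚ) ≠ 0 := by positivity
    have : (p : ℚ) ≠ 0 := by exact_mod_cast hp.out.ne_zero
    push_cast
    field_simp
    ring

lemma height_step_le {q : ℚ} (hq0 : q ≠ 0) (hv : 0 < padicValRat p q) {j : ℕ} (hj : j < p) :
    height (step p j q) ≤ height q := by
  obtain ⟨a, ha0, -, hheight, hstep⟩ := exists_step_eq_div hq0 hv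
  have h := height_intCast_div_le (-(q.den + j * a)) a ha0
  rw [← hstep] at h
  have := abs_add_mul_add_abs_le a (b := q.den) (by positivity) hj
  zify at h ⊢
  rw [abs_neg] at h
  linarith

lemma height_step_lt {q : ℚ} (hq : q < 0) (hv : 0 < padicValRat p q) {j : ℕ} (hj : j < p) :
    height (step p j q) < height q := by
  obtain ⟨a, ha0, ha, hheight, hstep⟩ := exists_step_eq_div hq.ne hv
  have h := height_intCast_div_le (-(q.den + j * a)) a ha0
  rw [← hstep] at h
  have := abs_add_mul_add_abs_lt (b := q.den) (by positivity) (ha hq) hp.out.one_lt hj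
  zify at h ⊢
  rw [abs_neg] at h
  linarith

/-- `T` is a `Φ₀^{[-1]}` step on the nonzero elements of `pℤ_p`. -/
def IsPhiZeroInvMap (T : ℚ_[p] → ℚ_[p]) : Prop :=
  ∀ α : ℚ_[p], α ≠ 0 → ‖α‖ < 1 →
    ∃ j : ℕ, j < p ∧
      ‖-(p : ℚ_[p]) ^ α.valuation / α - (j : ℚ_[p])‖ < 1 ∧
      T α = -(p : ℚ_[p]) ^ α.valuation / α - (j : ℚ_[p])

variable {T : ℚ_[p] → ℚ_[p]}

lemma exists_apply_ratCast_eq_step (hT : IsPhiZeroInvMap T) {q : ℚ} (hq0 : q ≠ 0)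
    (hq : ‖(q : ℚ_[p])‖ < 1) :
    ∃ j < p, T q = step p j q ∧ ‖(step p j q : ℚ_[p])‖ < 1 := by
  obtain ⟨j, hj, hnorm, hTq⟩ := hT q (by exact_mod_cast hq0) hq
  have hcast :
      ((step p j q : ℚ) : ℚ_[p]) = -(p : ℚ_[p]) ^ (q : ℚ_[p]).valuation / q - j := by
    rw [step, Padic.valuation_ratCast]
    push_cast
    ring
  exact ⟨j, hj, hTq.trans hcast.symm, hcast ▸ hnorm⟩

lemma exists_apply_ratCast_eq_of_neg (hT : IsPhiZeroInvMap T) {q : ℚ} (hq0 : q < 0)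
    (hq : ‖(q : ℚ_[p])‖ < 1) :
    ∃ r : ℚ, T q = r ∧ ‖(r : ℚ_[p])‖ < 1 ∧ height r < height q := by
  obtain ⟨j, hj, hTq, hr⟩ := exists_apply_ratCast_eq_step hT hq0.ne hq
  exact ⟨_, hTq, hr, height_step_lt hq0 (padicValRat_pos_of_norm_lt_one hq0.ne hq) hj⟩

lemma exists_apply_ratCast_eq_of_pos (hT : IsPhiZeroInvMap T) {q : ℚ} (hq0 : 0 < q)
    (hq : ‖(q : ℚ_[p])‖ < 1) :
    ∃ r : ℚ, T q = r ∧ ‖(r : ℚ_[p])‖ < 1 ∧ r < 0 ∧ height r ≤ height q := by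
  obtain ⟨j, hj, hTq, hr⟩ := exists_apply_ratCast_eq_step hT hq0.ne' hq
  exact ⟨_, hTq, hr, step_neg_of_pos hq0 j,
    height_step_le hq0.ne' (padicValRat_pos_of_norm_lt_one hq0.ne' hq) hj⟩

end PadicContinuedFraction

open PadicContinuedFraction

theorem stmt_5_general (p : ℕ) [Fact p.Prime] (T : ℚ_[p] → ℚ_[p])
    (hT : ∀ α : ℚ_[p], α ≠ 0 → ‖α‖ < 1 →
      ∃ j : ℕ, j < p ∧
        ‖-(p : ℚ_[p]) ^ α.valuation / α - (j : ℚ_[p])‖ < 1 ∧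
        T α = -(p : ℚ_[p]) ^ α.valuation / α - (j : ℚ_[p])) :
    ∀ q : ℚ, ‖(q : ℚ_[p])‖ < 1 → ∃ n : ℕ, T^[n] (q : ℚ_[p]) = 0 := by
  intro q
  induction hN : height q using Nat.strong_induction_on generalizing q with
  | _ N IH =>
  intro hq
  rcases lt_trichotomy q 0 with hneg | rfl | hpos
  · obtain ⟨r, hTq, hr, hlt⟩ := exists_apply_ratCast_eq_of_neg hT hneg hq
    obtain ⟨n, hn⟩ := IH _ (hN ▸ hlt) r rfl hr
    exact ⟨n + 1, by rw [Function.iterate_succ_apply, hTq, hn]⟩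
  · exact ⟨0, by simp⟩
  · obtain ⟨r, hTq, hr, hrneg, hle⟩ := exists_apply_ratCast_eq_of_pos hT hpos hq
    obtain ⟨s, hTr, hs, hlt⟩ := exists_apply_ratCast_eq_of_neg hT hrneg hr
    obtain ⟨n, hn⟩ := IH _ (hN ▸ hlt.trans_le hle) s rfl hs
    refine ⟨n + 2, ?_⟩
    rw [Function.iterate_succ_apply, hTq, Function.iterate_succ_apply, hTr, hn]

/-- Proposition: every rational number in `pℤ_p` has a finite `Φ₀^{[-1]}` continued
fraction expansion.  `T` is the `Φ₀^{[-1]}` step: `T(0) = 0` and for nonzero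
`α ∈ pℤ_p`, `T(α) = −p^{ord_p α}/α − ω_p(−p^{ord_p α}/α)` where the digit
`j = ω_p(·)` is characterized by `j < p` and `‖· − j‖ < 1`. -/
theorem stmt_5 (p : ℕ) [Fact p.Prime] (T : ℚ_[p] → ℚ_[p])
    (hT0 : T 0 = 0)
    (hT : ∀ α : ℚ_[p], α ≠ 0 → ‖α‖ < 1 →
      ∃ j : ℕ, j < p ∧
        ‖-(p : ℚ_[p]) ^ α.valuation / α - (j : ℚ_[p])‖ < 1 ∧
        T α = -(p : ℚ_[p]) ^ α.valuation / α - (j : ℚ_[p])) :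
    ∀ q : ℚ, ‖(q : ℚ_[p])‖ < 1 → ∃ n : ℕ, T^[n] (q : ℚ_[p]) = 0 :=
  stmt_5_general p T hT
end

section
/- Let p be a prime, α ∈ pℤ_p ∩ ℚ nonzero, written α = m₁ p^k / m₂ with m₁, m₂ coprime integers not divisible by p, and k ≥ 1. Then the Φ₀^{[−1]} remainder T(α) = −p^k/α − ω_p(−p^k/α) equals (−m₂ − j m₁)/m₁ where j = ω_p(−m₂/m₁); in particular T(α) is again a rational number in pℤ_p whose denominator (in lowest terms) divides m₁. -/
theorem neg_pow_div_mul_pow_div {K : Type*} [Field K] {q : K} (hq : q ≠ 0) (a b : K) (k : ℕ) :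
    -q ^ k / (a * q ^ k / b) = -b / a := by
  rw [div_div_eq_mul_div, neg_mul, neg_div, neg_div, mul_comm a,
    mul_div_mul_left _ _ (pow_ne_zero k hq)]

theorem Rat.den_div_intCast_dvd (n m : ℤ) : (((n : ℚ) / (m : ℚ)).den : ℤ) ∣ m := by
  rw [← Rat.divInt_eq_div]
  exact Rat.den_dvd n m

theorem stmt_6_general (p : ℕ) [Fact p.Prime] (m₁ m₂ : ℤ) (k : ℕ)
    (h1 : ¬ (p : ℤ) ∣ m₁)
    (α : ℚ) (hα : α = (m₁ : ℚ) * (p : ℚ) ^ k / (m₂ : ℚ))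
    (j : ℕ)
    (hdig : ‖-(m₂ : ℚ_[p]) / (m₁ : ℚ_[p]) - (j : ℚ_[p])‖ < 1) :
    -(p : ℚ_[p]) ^ k / (α : ℚ_[p]) - (j : ℚ_[p])
        = ((-m₂ - (j : ℤ) * m₁ : ℤ) : ℚ_[p]) / (m₁ : ℚ_[p]) ∧
    ‖((-m₂ - (j : ℤ) * m₁ : ℤ) : ℚ_[p]) / (m₁ : ℚ_[p])‖ < 1 ∧
    ((((-m₂ - (j : ℤ) * m₁ : ℤ) : ℚ) / (m₁ : ℚ)).den : ℤ) ∣ m₁ := by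
  have hm₁ : (m₁ : ℚ_[p]) ≠ 0 := Int.cast_ne_zero.mpr fun h ↦ h1 (h ▸ dvd_zero _)
  have hp : (p : ℚ_[p]) ≠ 0 := Nat.cast_ne_zero.mpr (Fact.out : p.Prime).ne_zero
  have hT : ((-m₂ - (j : ℤ) * m₁ : ℤ) : ℚ_[p]) / (m₁ : ℚ_[p])
      = -(m₂ : ℚ_[p]) / (m₁ : ℚ_[p]) - (j : ℚ_[p]) := by
    push_cast
    rw [div_sub' hm₁, mul_comm]
  refine ⟨?_, hT ▸ hdig, Rat.den_div_intCast_dvd _ _⟩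
  rw [hT, hα]
  push_cast
  rw [neg_pow_div_mul_pow_div hp]

/-- Explicit form of the `Φ₀^{[-1]}` remainder: for `α = m₁p^k/m₂` and
`j = ω_p(−m₂/m₁)`, one has `−p^k/α − j = (−m₂ − j m₁)/m₁ ∈ pℤ_p`, a rational
whose reduced denominator divides `m₁`. -/
theorem stmt_6 (p : ℕ) [Fact p.Prime] (m₁ m₂ : ℤ) (k : ℕ) (hk : 1 ≤ k)
    (hco : IsCoprime m₁ m₂) (h1 : ¬ (p : ℤ) ∣ m₁) (h2 : ¬ (p : ℤ) ∣ m₂)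
    (α : ℚ) (hα : α = (m₁ : ℚ) * (p : ℚ) ^ k / (m₂ : ℚ))
    (j : ℕ) (hj : j < p)
    (hdig : ‖-(m₂ : ℚ_[p]) / (m₁ : ℚ_[p]) - (j : ℚ_[p])‖ < 1) :
    -(p : ℚ_[p]) ^ k / (α : ℚ_[p]) - (j : ℚ_[p])
        = ((-m₂ - (j : ℤ) * m₁ : ℤ) : ℚ_[p]) / (m₁ : ℚ_[p]) ∧
    ‖((-m₂ - (j : ℤ) * m₁ : ℤ) : ℚ_[p]) / (m₁ : ℚ_[p])‖ < 1 ∧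
    ((((-m₂ - (j : ℤ) * m₁ : ℤ) : ℚ) / (m₁ : ℚ)).den : ℤ) ∣ m₁ :=
  stmt_6_general p m₁ m₂ k h1 α hα j hdig
end

section
/- Let p be a prime, K ⊂ ℚ_p a cubic field, K = ℚ(z) where z is an algebraic integer with minimal polynomial x³ + a₁x² + a₂x + a₃p^k (a_i ∈ ℤ, ord_p(a₂) = ord_p(a₃) = 0, k > 0). Then for α = (z, z²), the Φ₁^{[ε,z]} continued fraction remainders satisfy: α₁ = (εz, −ε(z² + a₁z)/a₃), α₂ = (−εz/a₃, −(z² + a₁z)/a₃), α₃ = (z, z² + a₁z), α₄ = α₁; hence (z, z²) has an eventually periodic Φ₁^{[ε,z]} expansion with period 3 starting at index 1. -/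
/-- Normalization of one component of the 2-dimensional `Φ₁^{[ε,z]}` step on a cubic
field `K = ℚ(z)`: given the value `g` (before subtraction of the digit), the output
`h` is `(g − ω_p(g))/a' − ⟨a₀/a'⟩_p`, where `g − ω_p(g) = a₀ + a₁ z + a₂ z²` with
rational coefficients, `a'` is the p-free positive part of the gcd of the numerators
of `a₁, a₂` (`a' = 1` if both vanish), and `⟨x⟩_p ∈ pℤ_p ∩ ℚ` is the positive-power
part of the p-adic expansion of `x` (so `x − ⟨x⟩_p = N/p^t`, `0 ≤ N < p^{t+1}`). -/
def PhiComp (p : ℕ) [Fact p.Prime] (z g h : ℚ_[p]) : Prop :=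
  ∃ (j : ℕ) (a₀ a₁ a₂ : ℚ) (a' : ℕ) (c : ℚ) (t N : ℕ),
    j < p ∧ ‖g - (j : ℚ_[p])‖ < 1 ∧
    g - (j : ℚ_[p]) = (a₀ : ℚ_[p]) + (a₁ : ℚ_[p]) * z + (a₂ : ℚ_[p]) * z ^ 2 ∧
    0 < a' ∧
    ((a₁ = 0 ∧ a₂ = 0 ∧ a' = 1) ∨
      (¬ (a₁ = 0 ∧ a₂ = 0) ∧ ¬ p ∣ a' ∧
        ∃ s : ℕ, Nat.gcd a₁.num.natAbs a₂.num.natAbs = a' * p ^ s)) ∧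
    a₀ / (a' : ℚ) - c = (N : ℚ) / (p : ℚ) ^ t ∧ N < p ^ (t + 1) ∧
    ‖(c : ℚ_[p])‖ < 1 ∧
    h = ((a₀ / (a' : ℚ) - c : ℚ) : ℚ_[p]) + ((a₁ / (a' : ℚ) : ℚ) : ℚ_[p]) * z
          + ((a₂ / (a' : ℚ) : ℚ) : ℚ_[p]) * z ^ 2

/-- One full step of the 2-dimensional `Φ₁^{[ε,z]}` algorithm with pivot index 1:
normalize `g₁ = εp^{ord β₁}/β₁` and `g₂ = εp^{max(ord β₁ − ord β₂,0)} β₂/β₁`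
componentwise, then apply the cyclic shift `S`. -/
def PhiStep2 (p : ℕ) [Fact p.Prime] (ε : ℤ) (z : ℚ_[p])
    (α β : ℚ_[p] × ℚ_[p]) : Prop :=
  ∃ h₁ h₂ : ℚ_[p],
    β = (h₂, h₁) ∧
    PhiComp p z ((ε : ℚ_[p]) * (p : ℚ_[p]) ^ (α.1).valuation / α.1) h₁ ∧
    PhiComp p z
      ((ε : ℚ_[p]) * (p : ℚ_[p]) ^ (max ((α.1).valuation - (α.2).valuation) 0)
        * α.2 / α.1) h₂


/-!
Every remainder in the orbit of `(z, z²)` has the form `(x, y)` with `x = u z` and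
`y / x = v (z + b)`, where `u, v ∈ {±1, ±1/a₃}` and `b ∈ {0, a₁}`. Since `ord_p z = k` and
`pᵏ / z = -(z² + a₁z + a₂) / a₃`, the two quotients of a step are then `±(z² + a₁z + a₂) / n` and
`±(z + b) / n` with `p ∤ n`. Removing the digit and the constant term leaves content `1`, which
gives the next remainder, and four steps close the cycle `α₁ → α₂ → α₃ → α₁`. Because `1, z, z²` are
`ℚ`-independent, a step is determined by its input, so any map realising the algorithm on `ℚ(z)`
follows this cycle.
-/

lemma Nat.Prime.not_natCast_dvd_of_isUnit {p : ℕ} (hp : p.Prime) {e : ℤ} (he : IsUnit e) :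
    ¬ (p : ℤ) ∣ e :=
  fun h => (Nat.prime_iff_prime_int.mp hp).not_isUnit (isUnit_of_dvd_unit h he)

namespace Padic

variable {p : ℕ} [Fact p.Prime]

lemma norm_intCast_eq_one_of_not_dvd {n : ℤ} (h : ¬ (p : ℤ) ∣ n) : ‖(n : ℚ_[p])‖ = 1 :=
  (norm_int_le_one n).eq_or_lt.resolve_right (mt norm_intCast_lt_one_iff.1 h)

lemma intCast_ne_zero_of_not_dvd {n : ℤ} (h : ¬ (p : ℤ) ∣ n) : (n : ℚ_[p]) ≠ 0 :=
  norm_ne_zero_iff.1 (by rw [norm_intCast_eq_one_of_not_dvd h]; exact one_ne_zero)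

lemma norm_sub_lt_one {x y : ℚ_[p]} (hx : ‖x‖ < 1) (hy : ‖y‖ < 1) : ‖x - y‖ < 1 := by
  rw [sub_eq_add_neg]
  exact (nonarchimedean x (-y)).trans_lt (max_lt hx (by rwa [norm_neg]))

lemma exists_lt_norm_sub_natCast_lt_one {x : ℚ_[p]} (hx : ‖x‖ ≤ 1) :
    ∃ j : ℕ, j < p ∧ ‖x - j‖ < 1 := by
  obtain ⟨j, hj, hmem⟩ := PadicInt.exists_mem_range (⟨x, hx⟩ : ℤ_[p])
  rw [IsLocalRing.mem_maximalIdeal, PadicInt.mem_nonunits] at hmem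
  exact ⟨j, hj, hmem⟩

lemma natCast_eq_of_norm_sub_lt_one {x : ℚ_[p]} {i j : ℕ} (hi : i < p) (hj : j < p)
    (hxi : ‖x - i‖ < 1) (hxj : ‖x - j‖ < 1) : i = j := by
  have hdvd : (p : ℤ) ∣ (i : ℤ) - j := norm_intCast_lt_one_iff.1 <| by
    simpa using norm_sub_lt_one hxj hxi
  have := Int.eq_zero_of_abs_lt_dvd hdvd (by rw [abs_sub_lt_iff]; omega)
  omega

lemma pow_succ_dvd_of_norm_div_pow_lt_one {m : ℤ} {n : ℕ}
    (h : ‖(m : ℚ_[p]) / (p : ℚ_[p]) ^ n‖ < 1) : (p : ℤ) ^ (n + 1) ∣ m := by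
  have hp : (0 : ℝ) < p := by exact_mod_cast (Fact.out : p.Prime).pos
  rw [norm_div, norm_p_pow, div_lt_one (zpow_pos hp _)] at h
  have := (norm_le_pow_iff_norm_lt_pow_add_one (m : ℚ_[p]) (-(n + 1 : ℕ))).2
    (by rwa [show -((n + 1 : ℕ) : ℤ) + 1 = -n by push_cast; ring])
  exact_mod_cast (norm_int_le_pow_iff_dvd m (n + 1)).1 this

lemma valuation_eq_of_norm_eq {x y : ℚ_[p]} (hx : x ≠ 0) (hy : y ≠ 0) (h : ‖x‖ = ‖y‖) :
    x.valuation = y.valuation := by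
  have hp : (1 : ℝ) < p := by exact_mod_cast (Fact.out : p.Prime).one_lt
  rw [norm_eq_zpow_neg_valuation hx, norm_eq_zpow_neg_valuation hy] at h
  exact neg_injective (zpow_right_injective₀ (zero_lt_one.trans hp) hp.ne' h)

lemma valuation_le_of_norm_le {x y : ℚ_[p]} (hx : x ≠ 0) (hy : y ≠ 0) (h : ‖y‖ ≤ ‖x‖) :
    x.valuation ≤ y.valuation := by
  have hp : (1 : ℝ) < p := by exact_mod_cast (Fact.out : p.Prime).one_lt
  rw [norm_eq_zpow_neg_valuation hx, norm_eq_zpow_neg_valuation hy,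
    zpow_le_zpow_iff_right₀ hp] at h
  omega

lemma zpow_max_valuation_sub_mul {x y : ℚ_[p]} (hx : x ≠ 0) (h : ‖y‖ ≤ ‖x‖) :
    (p : ℚ_[p]) ^ max (x.valuation - y.valuation) 0 * y = y := by
  rcases eq_or_ne y 0 with rfl | hy
  · rw [mul_zero]
  · rw [max_eq_right (by linarith [valuation_le_of_norm_le hx hy h]), zpow_zero, one_mul]

end Padic

section PhiComp

variable {p : ℕ} [Fact p.Prime]

/-- `c` is the `⟨a⟩_p` of `PhiComp`: two choices of `a - c` differ by an element of
`ℤ[1/p] ∩ pℤ_(p) = pℤ` of absolute value `< p`. -/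
lemma eq_of_sub_eq_div_pow {a c c' : ℚ} {t t' N N' : ℕ}
    (h : a - c = N / (p : ℚ) ^ t) (hN : N < p ^ (t + 1))
    (h' : a - c' = N' / (p : ℚ) ^ t') (hN' : N' < p ^ (t' + 1))
    (hc : ‖(c : ℚ_[p])‖ < 1) (hc' : ‖(c' : ℚ_[p])‖ < 1) : c = c' := by
  have hp : (p : ℚ) ≠ 0 := by exact_mod_cast (Fact.out : p.Prime).ne_zero
  set m : ℤ := N' * p ^ t - N * p ^ t'
  have hcc : c - c' = m / (p : ℚ) ^ (t + t') := by
    rw [show c - c' = N' / (p : ℚ) ^ t' - N / (p : ℚ) ^ t by linarith]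
    push_cast [m]
    field_simp
    ring
  have hdvd : (p : ℤ) ^ (t + t' + 1) ∣ m := Padic.pow_succ_dvd_of_norm_div_pow_lt_one <| by
    have hcast := congrArg (fun q : ℚ => (q : ℚ_[p])) hcc
    push_cast at hcast
    exact hcast ▸ Padic.norm_sub_lt_one hc hc'
  have hbound : ∀ {s u M : ℕ}, M < p ^ (s + 1) → M * p ^ u < p ^ (u + s + 1) := fun hM => by
    calc _ < p ^ (_ + 1) * p ^ _ :=
          Nat.mul_lt_mul_of_pos_right hM (pow_pos (Fact.out : p.Prime).pos _)
      _ = _ := by ring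
  have hm : m = 0 := by
    refine Int.eq_zero_of_abs_lt_dvd hdvd ?_
    have b := hbound (u := t') hN
    have b' := hbound (u := t) hN'
    rw [add_comm t' t] at b
    zify at b b'
    rw [abs_sub_lt_iff]
    constructor <;> nlinarith [Nat.zero_le (N * p ^ t'), Nat.zero_le (N' * p ^ t)]
  rw [← sub_eq_zero, hcc, hm, Int.cast_zero, zero_div]

lemma eq_ite_ordCompl_of_content {a₁ a₂ : ℚ} {a' : ℕ}
    (h : (a₁ = 0 ∧ a₂ = 0 ∧ a' = 1) ∨ (¬ (a₁ = 0 ∧ a₂ = 0) ∧ ¬ p ∣ a' ∧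
      ∃ s : ℕ, Nat.gcd a₁.num.natAbs a₂.num.natAbs = a' * p ^ s)) :
    a' = if a₁ = 0 ∧ a₂ = 0 then 1 else ordCompl[p] (Nat.gcd a₁.num.natAbs a₂.num.natAbs) := by
  rcases h with ⟨h₁, h₂, rfl⟩ | ⟨hne, hp, s, hs⟩
  · simp [h₁, h₂]
  · rw [if_neg hne, hs, mul_comm, Nat.ordCompl_pow_mul_of_not_dvd s Fact.out hp]

lemma PhiComp.unique {z g h h' : ℚ_[p]}
    (hind : ∀ c₀ c₁ c₂ : ℚ,
      (c₀ : ℚ_[p]) + (c₁ : ℚ_[p]) * z + (c₂ : ℚ_[p]) * z ^ 2 = 0 →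
      c₀ = 0 ∧ c₁ = 0 ∧ c₂ = 0)
    (H : PhiComp p z g h) (H' : PhiComp p z g h') : h = h' := by
  obtain ⟨j, a₀, a₁, a₂, a', c, t, N, hj, hgj, hg, -, ha', hc, hN, hcn, rfl⟩ := H
  obtain ⟨j', b₀, b₁, b₂, b', c', t', N', hj', hgj', hg', -, hb', hc', hN', hcn', rfl⟩ := H'
  obtain rfl := Padic.natCast_eq_of_norm_sub_lt_one hj hj' hgj hgj'
  obtain ⟨e₀, e₁, e₂⟩ := hind (a₀ - b₀) (a₁ - b₁) (a₂ - b₂) <| by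
    push_cast
    linear_combination hg.symm.trans hg'
  obtain ⟨rfl, rfl, rfl⟩ : a₀ = b₀ ∧ a₁ = b₁ ∧ a₂ = b₂ :=
    ⟨sub_eq_zero.1 e₀, sub_eq_zero.1 e₁, sub_eq_zero.1 e₂⟩
  obtain rfl : a' = b' :=
    (eq_ite_ordCompl_of_content ha').trans (eq_ite_ordCompl_of_content hb').symm
  obtain rfl := eq_of_sub_eq_div_pow hc hN hc' hN' hcn hcn'
  rfl

lemma PhiComp.exists_eq_ratCast {z g h : ℚ_[p]} (H : PhiComp p z g h) :
    ∃ c₀ c₁ c₂ : ℚ, h = (c₀ : ℚ_[p]) + (c₁ : ℚ_[p]) * z + (c₂ : ℚ_[p]) * z ^ 2 :=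
  let ⟨_, _, _, _, _, _, _, _, _, _, _, _, _, _, _, _, hh⟩ := H
  ⟨_, _, _, hh⟩

/-- Witnesses: `a' = 1` because `gcd(m₁, m₂) = 1`, and `c` is the whole constant term
`m₀ / n - j`, which lies in `pℤ_(p)`. -/
lemma PhiComp.of_intCast_mul {z g h : ℚ_[p]} (hz : ‖z‖ < 1) {n m₀ m₁ m₂ : ℤ}
    (hn : ¬ (p : ℤ) ∣ n) (hm : Int.gcd m₁ m₂ = 1)
    (hg : n * g = m₀ + m₁ * z + m₂ * z ^ 2) (hh : n * h = m₁ * z + m₂ * z ^ 2) :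
    PhiComp p z g h := by
  have hn0 : (n : ℚ_[p]) ≠ 0 := Padic.intCast_ne_zero_of_not_dvd hn
  have hnorm (m : ℤ) : ‖((m / n : ℚ) : ℚ_[p])‖ ≤ 1 := by
    push_cast
    rw [norm_div, Padic.norm_intCast_eq_one_of_not_dvd hn, div_one]
    exact Padic.norm_int_le_one m
  have hsmall (m : ℤ) {w : ℚ_[p]} (hw : ‖w‖ < 1) : ‖((m / n : ℚ) : ℚ_[p]) * w‖ < 1 := by
    rw [norm_mul]
    exact mul_lt_one_of_nonneg_of_lt_one_right (hnorm m) (norm_nonneg w) hw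
  have hz2 : ‖z ^ 2‖ < 1 := by
    rw [norm_pow]
    exact pow_lt_one₀ (norm_nonneg z) hz two_ne_zero
  have hnum (m : ℤ) : (m / n : ℚ).num.natAbs ∣ m.natAbs := by
    rw [← Rat.divInt_eq_div]
    exact Int.natAbs_dvd_natAbs.2 (Rat.num_dvd m (by exact_mod_cast hn0))
  have hgcd : Nat.gcd (m₁ / n : ℚ).num.natAbs (m₂ / n : ℚ).num.natAbs = 1 :=
    Nat.dvd_one.1 (hm ▸ Nat.dvd_gcd ((Nat.gcd_dvd_left _ _).trans (hnum m₁))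
      ((Nat.gcd_dvd_right _ _).trans (hnum m₂)))
  obtain ⟨j, hj, hj0⟩ := Padic.exists_lt_norm_sub_natCast_lt_one (hnorm m₀)
  have hgj : g - j = ((m₀ / n - j : ℚ) : ℚ_[p]) + ((m₁ / n : ℚ) : ℚ_[p]) * z
      + ((m₂ / n : ℚ) : ℚ_[p]) * z ^ 2 := by
    push_cast
    field_simp
    linear_combination hg
  refine ⟨j, _, _, _, 1, (m₀ / n - j : ℚ), 0, 0, hj, ?_, hgj, one_pos,
    Or.inr ⟨fun h0 => by simp [h0.1, h0.2] at hgcd, by simpa using (Fact.out : p.Prime).ne_one,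
      0, by simpa using hgcd⟩, by simp, by simpa using (Fact.out : p.Prime).pos, by simpa using hj0,
    ?_⟩
  · rw [hgj]
    refine (Padic.nonarchimedean _ _).trans_lt (max_lt ?_ (hsmall m₂ hz2))
    exact (Padic.nonarchimedean _ _).trans_lt (max_lt (by simpa using hj0) (hsmall m₁ hz))
  · push_cast
    field_simp
    linear_combination hh

end PhiComp

section PhiStep2

variable {p : ℕ} [Fact p.Prime] {ε : ℤ} {z : ℚ_[p]}

lemma PhiStep2.unique
    (hind : ∀ c₀ c₁ c₂ : ℚ,
      (c₀ : ℚ_[p]) + (c₁ : ℚ_[p]) * z + (c₂ : ℚ_[p]) * z ^ 2 = 0 →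
      c₀ = 0 ∧ c₁ = 0 ∧ c₂ = 0)
    {α β β' : ℚ_[p] × ℚ_[p]} (H : PhiStep2 p ε z α β) (H' : PhiStep2 p ε z α β') : β = β' := by
  obtain ⟨h₁, h₂, rfl, c₁, c₂⟩ := H
  obtain ⟨h₁', h₂', rfl, c₁', c₂'⟩ := H'
  rw [c₁.unique hind c₁', c₂.unique hind c₂']

lemma PhiStep2.exists_eq_ratCast_fst {α β : ℚ_[p] × ℚ_[p]} (H : PhiStep2 p ε z α β) :
    ∃ c₀ c₁ c₂ : ℚ, β.1 = (c₀ : ℚ_[p]) + (c₁ : ℚ_[p]) * z + (c₂ : ℚ_[p]) * z ^ 2 := by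
  obtain ⟨_, _, rfl, -, H₂⟩ := H
  exact H₂.exists_eq_ratCast

lemma PhiStep2.exists_eq_ratCast_snd {α β : ℚ_[p] × ℚ_[p]} (H : PhiStep2 p ε z α β) :
    ∃ c₀ c₁ c₂ : ℚ, β.2 = (c₀ : ℚ_[p]) + (c₁ : ℚ_[p]) * z + (c₂ : ℚ_[p]) * z ^ 2 := by
  obtain ⟨_, _, rfl, H₁, -⟩ := H
  exact H₁.exists_eq_ratCast

end PhiStep2

lemma Function.iterate_add_three_eq_of_cycle {α : Type*} {f : α → α} {x₀ x₁ x₂ x₃ : α}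
    (h₀ : f x₀ = x₁) (h₁ : f x₁ = x₂) (h₂ : f x₂ = x₃) (h₃ : f x₃ = x₁) {n : ℕ} (hn : 1 ≤ n) :
    f^[n + 3] x₀ = f^[n] x₀ := by
  obtain ⟨m, rfl⟩ := Nat.exists_eq_add_of_le' hn
  have hper : f^[3] x₁ = x₁ := by simp [h₁, h₂, h₃]
  rw [show m + 1 + 3 = m + 3 + 1 by omega, Function.iterate_succ_apply, h₀,
    Function.iterate_add_apply, hper, Function.iterate_succ_apply, h₀]

section Cubic

variable {p : ℕ} [Fact p.Prime] {a₁ a₂ a₃ : ℤ} {k : ℕ} {z : ℚ_[p]}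

lemma ne_zero_of_cubic (h3 : ¬ (p : ℤ) ∣ a₃)
    (hz : z ^ 3 + (a₁ : ℚ_[p]) * z ^ 2 + (a₂ : ℚ_[p]) * z + (a₃ : ℚ_[p]) * (p : ℚ_[p]) ^ k = 0) :
    z ≠ 0 := by
  rintro rfl
  have hp : (p : ℚ_[p]) ≠ 0 := by exact_mod_cast (Fact.out : p.Prime).ne_zero
  exact mul_ne_zero (Padic.intCast_ne_zero_of_not_dvd h3) (pow_ne_zero k hp) (by simpa using hz)

/-- `z (z² + a₁z + a₂) = -a₃pᵏ` and the second factor is a unit because `p ∤ a₂`. -/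
lemma valuation_eq_of_cubic (h2 : ¬ (p : ℤ) ∣ a₂) (h3 : ¬ (p : ℤ) ∣ a₃) (hznorm : ‖z‖ < 1)
    (hz : z ^ 3 + (a₁ : ℚ_[p]) * z ^ 2 + (a₂ : ℚ_[p]) * z + (a₃ : ℚ_[p]) * (p : ℚ_[p]) ^ k = 0) :
    z.valuation = k := by
  have hp : (p : ℚ_[p]) ≠ 0 := by exact_mod_cast (Fact.out : p.Prime).ne_zero
  have hsmall : ‖z * (z + a₁)‖ < 1 := by
    rw [norm_mul]
    exact mul_lt_one_of_nonneg_of_lt_one_left (norm_nonneg z) hznorm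
      ((Padic.nonarchimedean _ _).trans (max_le hznorm.le (Padic.norm_int_le_one a₁)))
  have hunit : ‖z * (z + a₁) + a₂‖ = 1 := by
    rw [Padic.add_eq_max_of_ne, Padic.norm_intCast_eq_one_of_not_dvd h2, max_eq_right hsmall.le]
    rw [Padic.norm_intCast_eq_one_of_not_dvd h2]
    exact hsmall.ne
  have hnorm : ‖z‖ = ‖(p : ℚ_[p]) ^ k‖ := by
    have := congrArg norm
      (show z * (z * (z + a₁) + a₂) = -(a₃ * (p : ℚ_[p]) ^ k) by linear_combination hz)
    rwa [norm_mul, hunit, mul_one, norm_neg, norm_mul,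
      Padic.norm_intCast_eq_one_of_not_dvd h3, one_mul] at this
  rw [Padic.valuation_eq_of_norm_eq (ne_zero_of_cubic h3 hz) (pow_ne_zero k hp) hnorm,
    Padic.valuation_pow, Padic.valuation_p, mul_one]

/-- Since `pᵏ / z = -(z² + a₁z + a₂) / a₃`, the hypotheses on `x` and `y` make the two quotients
of the step `e₂ (z² + a₁z + a₂) / n₂` and `e₁ (z + b) / n₁`. -/
lemma phiStep2_of_cubic (h2 : ¬ (p : ℤ) ∣ a₂) (h3 : ¬ (p : ℤ) ∣ a₃) (hznorm : ‖z‖ < 1)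
    (hz : z ^ 3 + (a₁ : ℚ_[p]) * z ^ 2 + (a₂ : ℚ_[p]) * z + (a₃ : ℚ_[p]) * (p : ℚ_[p]) ^ k = 0)
    {ε : ℤ} (hε : IsUnit ε) {x y β₁ β₂ : ℚ_[p]} {b e₁ n₁ e₂ n₂ : ℤ}
    (he₁ : IsUnit e₁) (he₂ : IsUnit e₂) (hn₁ : ¬ (p : ℤ) ∣ n₁) (hn₂ : ¬ (p : ℤ) ∣ n₂)
    (hx : e₂ * a₃ * x = -(ε * n₂ * z)) (hy : ε * n₁ * y = e₁ * x * (z + b))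
    (hβ₁ : n₁ * β₁ = e₁ * z) (hβ₂ : n₂ * β₂ = e₂ * (z ^ 2 + a₁ * z)) :
    PhiStep2 p ε z (x, y) (β₁, β₂) := by
  have hunit {e : ℤ} (he : IsUnit e) : ‖(e : ℚ_[p])‖ = 1 :=
    Padic.norm_intCast_eq_one_of_not_dvd ((Fact.out : p.Prime).not_natCast_dvd_of_isUnit he)
  have hz0 := ne_zero_of_cubic h3 hz
  have hε0 : (ε : ℚ_[p]) ≠ 0 := by exact_mod_cast hε.ne_zero
  have hn₂0 := Padic.intCast_ne_zero_of_not_dvd hn₂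
  have ha₃ := Padic.intCast_ne_zero_of_not_dvd h3
  have hx0 : x ≠ 0 := by
    rintro rfl
    exact mul_ne_zero (mul_ne_zero hε0 hn₂0) hz0 (by simpa using hx.symm)
  have hvx : x.valuation = k := by
    refine (Padic.valuation_eq_of_norm_eq hx0 hz0 ?_).trans (valuation_eq_of_cubic h2 h3 hznorm hz)
    simpa [hunit he₂, hunit hε, Padic.norm_intCast_eq_one_of_not_dvd h3,
      Padic.norm_intCast_eq_one_of_not_dvd hn₂] using congrArg norm hx
  have hyx : ‖y‖ ≤ ‖x‖ := by
    have := congrArg norm hy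
    simp only [norm_mul, hunit hε, hunit he₁, Padic.norm_intCast_eq_one_of_not_dvd hn₁,
      one_mul] at this
    rw [this]
    exact mul_le_of_le_one_right (norm_nonneg x)
      ((Padic.nonarchimedean _ _).trans (max_le hznorm.le (Padic.norm_int_le_one b)))
  refine ⟨β₂, β₁, rfl, ?_, ?_⟩
  · rw [hvx, zpow_natCast]
    refine PhiComp.of_intCast_mul hznorm hn₂ (m₀ := e₂ * a₂) (m₁ := e₂ * a₁) (m₂ := e₂)
      ?_ ?_ (by push_cast; linear_combination hβ₂)
    · simp [Int.gcd, Int.isUnit_iff_natAbs_eq.1 he₂]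
    · have hpk : (p : ℚ_[p]) ^ k = -(z * (z ^ 2 + a₁ * z + a₂)) / a₃ := by
        field_simp
        linear_combination hz
      rw [hpk]
      field_simp
      push_cast
      linear_combination -(z ^ 2 + a₁ * z + a₂) * hx
  · rw [mul_assoc, Padic.zpow_max_valuation_sub_mul hx0 hyx]
    refine PhiComp.of_intCast_mul hznorm hn₁ (m₀ := e₁ * b) (m₁ := e₁) (m₂ := 0)
      (by simp [Int.gcd, Int.isUnit_iff_natAbs_eq.1 he₁]) ?_ (by push_cast; linear_combination hβ₁)
    field_simp
    push_cast
    linear_combination hy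

end Cubic

theorem stmt_13_general (p : ℕ) [Fact p.Prime] (a₁ a₂ a₃ : ℤ) (k : ℕ)
    (h2 : ¬ (p : ℤ) ∣ a₂) (h3 : ¬ (p : ℤ) ∣ a₃)
    (z : ℚ_[p]) (hznorm : ‖z‖ < 1)
    (hz : z ^ 3 + (a₁ : ℚ_[p]) * z ^ 2 + (a₂ : ℚ_[p]) * z
        + (a₃ : ℚ_[p]) * (p : ℚ_[p]) ^ k = 0)
    (hind : ∀ c₀ c₁ c₂ : ℚ,
      (c₀ : ℚ_[p]) + (c₁ : ℚ_[p]) * z + (c₂ : ℚ_[p]) * z ^ 2 = 0 →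
      c₀ = 0 ∧ c₁ = 0 ∧ c₂ = 0)
    (ε : ℤ) (hε : ε = 1 ∨ ε = -1) :
    PhiStep2 p ε z (z, z ^ 2)
      ((ε : ℚ_[p]) * z, -(ε : ℚ_[p]) * (z ^ 2 + (a₁ : ℚ_[p]) * z) / (a₃ : ℚ_[p])) ∧
    PhiStep2 p ε z
      ((ε : ℚ_[p]) * z, -(ε : ℚ_[p]) * (z ^ 2 + (a₁ : ℚ_[p]) * z) / (a₃ : ℚ_[p]))
      (-(ε : ℚ_[p]) * z / (a₃ : ℚ_[p]), -(z ^ 2 + (a₁ : ℚ_[p]) * z) / (a₃ : ℚ_[p])) ∧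
    PhiStep2 p ε z
      (-(ε : ℚ_[p]) * z / (a₃ : ℚ_[p]), -(z ^ 2 + (a₁ : ℚ_[p]) * z) / (a₃ : ℚ_[p]))
      (z, z ^ 2 + (a₁ : ℚ_[p]) * z) ∧
    PhiStep2 p ε z (z, z ^ 2 + (a₁ : ℚ_[p]) * z)
      ((ε : ℚ_[p]) * z, -(ε : ℚ_[p]) * (z ^ 2 + (a₁ : ℚ_[p]) * z) / (a₃ : ℚ_[p])) ∧
    (∀ H : ℚ_[p] × ℚ_[p] → ℚ_[p] × ℚ_[p],
      (∀ γ : ℚ_[p] × ℚ_[p], γ.1 ≠ 0 →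
        (∃ c₀ c₁ c₂ : ℚ, γ.1 = (c₀ : ℚ_[p]) + (c₁ : ℚ_[p]) * z + (c₂ : ℚ_[p]) * z ^ 2) →
        (∃ c₀ c₁ c₂ : ℚ, γ.2 = (c₀ : ℚ_[p]) + (c₁ : ℚ_[p]) * z + (c₂ : ℚ_[p]) * z ^ 2) →
        PhiStep2 p ε z γ (H γ)) →
      ∀ n : ℕ, 1 ≤ n → H^[n + 3] (z, z ^ 2) = H^[n] (z, z ^ 2)) := by
  have hε' : IsUnit ε := Int.isUnit_iff.2 hε
  have h1 : ¬ (p : ℤ) ∣ 1 := (Fact.out : p.Prime).not_natCast_dvd_of_isUnit isUnit_one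
  have ha₃ := Padic.intCast_ne_zero_of_not_dvd h3
  have hz0 := ne_zero_of_cubic h3 hz
  set α₁ : ℚ_[p] × ℚ_[p] := (ε * z, -ε * (z ^ 2 + a₁ * z) / a₃)
  set α₂ : ℚ_[p] × ℚ_[p] := (-ε * z / a₃, -(z ^ 2 + a₁ * z) / a₃)
  set α₃ : ℚ_[p] × ℚ_[p] := (z, z ^ 2 + a₁ * z)
  have s₀ : PhiStep2 p ε z (z, z ^ 2) α₁ := by
    refine phiStep2_of_cubic h2 h3 hznorm hz hε' (b := 0) hε' hε'.neg h1 h3 ?_ ?_ ?_ ?_ <;>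
      push_cast <;> field_simp
    ring
  have s₁ : PhiStep2 p ε z α₁ α₂ := by
    refine phiStep2_of_cubic h2 h3 hznorm hz hε' (b := a₁) hε'.neg isUnit_one.neg h3 h3
      ?_ ?_ ?_ ?_ <;>
      push_cast <;> field_simp
  have s₂ : PhiStep2 p ε z α₂ α₃ := by
    refine phiStep2_of_cubic h2 h3 hznorm hz hε' (b := a₁) isUnit_one isUnit_one h1 h1
      ?_ ?_ ?_ ?_ <;>
      push_cast <;> field_simp
  have s₃ : PhiStep2 p ε z α₃ α₁ := by
    refine phiStep2_of_cubic h2 h3 hznorm hz hε' (b := a₁) hε' hε'.neg h1 h3 ?_ ?_ ?_ ?_ <;>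
      push_cast <;> field_simp
  refine ⟨s₀, s₁, s₂, s₃, fun H hH n hn => ?_⟩
  have e₀ : H (z, z ^ 2) = α₁ :=
    PhiStep2.unique hind (hH _ hz0 ⟨0, 1, 0, by simp⟩ ⟨0, 0, 1, by simp⟩) s₀
  have e₁ : H α₁ = α₂ := PhiStep2.unique hind (hH _ (by simp [α₁, hz0, hε'.ne_zero])
    s₀.exists_eq_ratCast_fst s₀.exists_eq_ratCast_snd) s₁
  have e₂ : H α₂ = α₃ := PhiStep2.unique hind (hH _ (by simp [α₂, hz0, hε'.ne_zero, ha₃])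
    s₁.exists_eq_ratCast_fst s₁.exists_eq_ratCast_snd) s₂
  have e₃ : H α₃ = α₁ := PhiStep2.unique hind
    (hH _ hz0 s₂.exists_eq_ratCast_fst s₂.exists_eq_ratCast_snd) s₃
  exact Function.iterate_add_three_eq_of_cycle e₀ e₁ e₂ e₃ hn

/-- Theorem 4 of the paper: for a cubic `z` with minimal polynomial
`x³ + a₁x² + a₂x + a₃p^k` (`a_i ∈ ℤ`, `ord_p a₂ = ord_p a₃ = 0`, `k > 0`), the
`Φ₁^{[ε,z]}` remainders of `(z, z²)` are
`α₁ = (εz, −ε(z²+a₁z)/a₃)`, `α₂ = (−εz/a₃, −(z²+a₁z)/a₃)`, `α₃ = (z, z²+a₁z)`,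
`α₄ = α₁`; hence the expansion is eventually periodic with period 3 from index 1. -/
theorem stmt_13 (p : ℕ) [Fact p.Prime] (a₁ a₂ a₃ : ℤ) (k : ℕ) (hk : 0 < k)
    (h2 : ¬ (p : ℤ) ∣ a₂) (h3 : ¬ (p : ℤ) ∣ a₃)
    (z : ℚ_[p]) (hznorm : ‖z‖ < 1)
    (hz : z ^ 3 + (a₁ : ℚ_[p]) * z ^ 2 + (a₂ : ℚ_[p]) * z
        + (a₃ : ℚ_[p]) * (p : ℚ_[p]) ^ k = 0)
    (hind : ∀ c₀ c₁ c₂ : ℚ,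
      (c₀ : ℚ_[p]) + (c₁ : ℚ_[p]) * z + (c₂ : ℚ_[p]) * z ^ 2 = 0 →
      c₀ = 0 ∧ c₁ = 0 ∧ c₂ = 0)
    (ε : ℤ) (hε : ε = 1 ∨ ε = -1) :
    PhiStep2 p ε z (z, z ^ 2)
      ((ε : ℚ_[p]) * z, -(ε : ℚ_[p]) * (z ^ 2 + (a₁ : ℚ_[p]) * z) / (a₃ : ℚ_[p])) ∧
    PhiStep2 p ε z
      ((ε : ℚ_[p]) * z, -(ε : ℚ_[p]) * (z ^ 2 + (a₁ : ℚ_[p]) * z) / (a₃ : ℚ_[p]))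
      (-(ε : ℚ_[p]) * z / (a₃ : ℚ_[p]), -(z ^ 2 + (a₁ : ℚ_[p]) * z) / (a₃ : ℚ_[p])) ∧
    PhiStep2 p ε z
      (-(ε : ℚ_[p]) * z / (a₃ : ℚ_[p]), -(z ^ 2 + (a₁ : ℚ_[p]) * z) / (a₃ : ℚ_[p]))
      (z, z ^ 2 + (a₁ : ℚ_[p]) * z) ∧
    PhiStep2 p ε z (z, z ^ 2 + (a₁ : ℚ_[p]) * z)
      ((ε : ℚ_[p]) * z, -(ε : ℚ_[p]) * (z ^ 2 + (a₁ : ℚ_[p]) * z) / (a₃ : ℚ_[p])) ∧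
    (∀ H : ℚ_[p] × ℚ_[p] → ℚ_[p] × ℚ_[p],
      (∀ γ : ℚ_[p] × ℚ_[p], γ.1 ≠ 0 →
        (∃ c₀ c₁ c₂ : ℚ, γ.1 = (c₀ : ℚ_[p]) + (c₁ : ℚ_[p]) * z + (c₂ : ℚ_[p]) * z ^ 2) →
        (∃ c₀ c₁ c₂ : ℚ, γ.2 = (c₀ : ℚ_[p]) + (c₁ : ℚ_[p]) * z + (c₂ : ℚ_[p]) * z ^ 2) →
        PhiStep2 p ε z γ (H γ)) →
      ∀ n : ℕ, 1 ≤ n → H^[n + 3] (z, z ^ 2) = H^[n] (z, z ^ 2)) :=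
  stmt_13_general p a₁ a₂ a₃ k h2 h3 z hznorm hz hind ε hε
end

section
/- In the setting of a c-map with inverse step T⁻¹ on E = (pℤ_p)^s ∩ K^s: if the pivot coordinate α_{φ(α)} of α ∈ E is nonzero, then for all x, y ∈ E, |T⁻¹(x) − T⁻¹(y)|_p ≤ p^{−j} |x − y|_p where j = min{ord_p(α_i) : 1 ≤ i ≤ s} ≥ 1; and if α_{φ(α)} = 0 then |T⁻¹(x) − T⁻¹(y)|_p = |x − y|_p. -/
/-! The affine part `z ↦ B (z - γ)` has a matrix with integral entries and unit determinant, so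
its inverse is integral as well and the affine part is an isometry for the sup norm; it maps `E`
into the open unit ball, so the denominators `(B (x - γ))_j + v` are units. For units `a`, `b` and
`‖m‖ ≤ 1` the identity `m / a - n / b = (m (b - a) + a (m - n)) / (a b)` gives
`‖m / a - n / b‖ ≤ max ‖a - b‖ ‖m - n‖`, and the remaining factor `u p^k` has norm
`p^(-k) ≤ p^(-j)`. -/

open Finset Matrix

-- The explicit witness makes the left side match `univ.sup' ⟨i₀, mem_univ i₀⟩` syntactically.
theorem Pi.sup'_norm_eq_norm {ι E : Type*} [Fintype ι] [SeminormedAddGroup E] (x : ι → E)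
    (i₀ : ι) : univ.sup' ⟨i₀, mem_univ i₀⟩ (fun i => ‖x i‖) = ‖x‖ :=
  le_antisymm (sup'_le _ _ fun i _ => norm_le_pi_norm x i)
    ((pi_norm_le_iff_of_nonneg ((norm_nonneg _).trans (le_sup' (fun i => ‖x i‖) (mem_univ i₀)))).2
      fun i => le_sup' (fun i => ‖x i‖) (mem_univ i))

section Ultrametric

variable {K : Type*}

theorem IsUltrametricDist.norm_sub_lt_one {S : Type*} [SeminormedAddGroup S] [IsUltrametricDist S]
    {a b : S} (ha : ‖a‖ < 1) (hb : ‖b‖ < 1) : ‖a - b‖ < 1 := by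
  rw [sub_eq_add_neg]
  exact (norm_add_le_max _ _).trans_lt (max_lt ha (by rwa [norm_neg]))

theorem IsUltrametricDist.norm_add_eq_one_of_norm_lt_one {S : Type*} [SeminormedAddGroup S]
    [IsUltrametricDist S] {a v : S} (ha : ‖a‖ < 1) (hv : ‖v‖ = 1) : ‖a + v‖ = 1 := by
  rw [norm_add_eq_max_of_norm_ne_norm (by rw [hv]; exact ha.ne), hv, max_eq_right ha.le]

theorem norm_div_sub_div_le_max [NormedField K] [IsUltrametricDist K] {a b m n : K}
    (ha : ‖a‖ = 1) (hb : ‖b‖ = 1) (hm : ‖m‖ ≤ 1) : ‖m / a - n / b‖ ≤ max ‖a - b‖ ‖m - n‖ := by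
  have ha0 : a ≠ 0 := norm_ne_zero_iff.1 (by rw [ha]; exact one_ne_zero)
  have hb0 : b ≠ 0 := norm_ne_zero_iff.1 (by rw [hb]; exact one_ne_zero)
  have hsplit : m / a - n / b = (m * (b - a) + a * (m - n)) / (a * b) := by
    field_simp
    ring
  rw [hsplit, norm_div, norm_mul, ha, hb, mul_one, div_one]
  refine (IsUltrametricDist.norm_add_le_max _ _).trans (max_le_max ?_ ?_)
  · rw [norm_mul, norm_sub_rev]
    exact mul_le_of_le_one_left (norm_nonneg _) hm
  · rw [norm_mul, ha, one_mul]

theorem norm_mul_div_sub_mul_div_le [NormedField K] [IsUltrametricDist K] {C a b m n : K}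
    {r ε : ℝ} (hC : ‖C‖ ≤ r) (ha : ‖a‖ = 1) (hb : ‖b‖ = 1) (hm : ‖m‖ ≤ 1)
    (hab : ‖a - b‖ ≤ ε) (hmn : ‖m - n‖ ≤ ε) : ‖C * (m / a) - C * (n / b)‖ ≤ r * ε := by
  rw [← mul_sub, norm_mul]
  exact mul_le_mul hC ((norm_div_sub_div_le_max ha hb hm).trans (max_le hab hmn))
    (norm_nonneg _) ((norm_nonneg _).trans hC)

end Ultrametric

namespace Matrix

variable {K ι κ : Type*} [Fintype ι]

theorem norm_mulVec_le_of_norm_le_one [SeminormedRing K] [IsUltrametricDist K] [Fintype κ]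
    (M : Matrix κ ι K) (hM : ∀ i j, ‖M i j‖ ≤ 1) (d : ι → K) : ‖M *ᵥ d‖ ≤ ‖d‖ :=
  (pi_norm_le_iff_of_nonneg (norm_nonneg d)).2 fun i =>
    IsUltrametricDist.norm_sum_le_of_forall_le_of_nonneg (norm_nonneg d) fun l _ =>
      (norm_mul_le _ _).trans
        ((mul_le_mul (hM i l) (norm_le_pi_norm d l) (norm_nonneg _) zero_le_one).trans_eq
          (one_mul _))

theorem norm_mulVec_sub_sub_mulVec_sub_le [SeminormedRing K] [IsUltrametricDist K] [Fintype κ]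
    (M : Matrix κ ι K) (hM : ∀ i j, ‖M i j‖ ≤ 1) (x y c : ι → K) :
    ‖M *ᵥ (x - c) - M *ᵥ (y - c)‖ ≤ ‖x - y‖ := by
  rw [← mulVec_sub, sub_sub_sub_cancel_right]
  exact M.norm_mulVec_le_of_norm_le_one hM _

theorem norm_det_le_one [NormedCommRing K] [NormOneClass K] [IsUltrametricDist K]
    [DecidableEq ι] (M : Matrix ι ι K) (hM : ∀ i j, ‖M i j‖ ≤ 1) : ‖M.det‖ ≤ 1 := by
  rw [det_apply]
  refine IsUltrametricDist.norm_sum_le_of_forall_le_of_nonneg zero_le_one fun σ _ => ?_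
  have hprod : ‖∏ i, M (σ i) i‖ ≤ 1 :=
    (Finset.norm_prod_le _ _).trans (prod_le_one (fun _ _ => norm_nonneg _) fun i _ => hM _ _)
  rcases Int.units_eq_one_or (Equiv.Perm.sign σ) with h | h <;> simpa [h] using hprod

theorem norm_inv_apply_le_one [NormedField K] [IsUltrametricDist K] [DecidableEq ι]
    (M : Matrix ι ι K) (hM : ∀ i j, ‖M i j‖ ≤ 1) (hdet : ‖M.det‖ = 1) (i j : ι) :
    ‖M⁻¹ i j‖ ≤ 1 := by
  have hadj : ‖M.adjugate i j‖ ≤ 1 := by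
    rw [adjugate_apply]
    refine norm_det_le_one _ fun k l => ?_
    rw [updateRow_apply]
    split_ifs
    · rcases eq_or_ne l i with rfl | h
      · simp
      · simp [Pi.single_eq_of_ne h]
    · exact hM k l
  rw [inv_def, Ring.inverse_eq_inv', smul_apply, smul_eq_mul, norm_mul, norm_inv, hdet, inv_one,
    one_mul]
  exact hadj

theorem norm_mulVec_eq_of_norm_det_eq_one [NormedField K] [IsUltrametricDist K] [DecidableEq ι]
    (M : Matrix ι ι K) (hM : ∀ i j, ‖M i j‖ ≤ 1) (hdet : ‖M.det‖ = 1) (d : ι → K) :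
    ‖M *ᵥ d‖ = ‖d‖ := by
  have hunit : IsUnit M.det := isUnit_iff_ne_zero.2 (norm_ne_zero_iff.1 (by simp [hdet]))
  refine le_antisymm (norm_mulVec_le_of_norm_le_one M hM d) ?_
  calc ‖d‖ = ‖M⁻¹ *ᵥ (M *ᵥ d)‖ := by rw [mulVec_mulVec, nonsing_inv_mul M hunit, one_mulVec]
    _ ≤ ‖M *ᵥ d‖ := norm_mulVec_le_of_norm_le_one _ (norm_inv_apply_le_one M hM hdet) _

end Matrix

namespace Padic

variable {p : ℕ} [Fact p.Prime]

theorem one_le_valuation_of_norm_lt_one {x : ℚ_[p]} (hx0 : x ≠ 0) (hx : ‖x‖ < 1) :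
    1 ≤ x.valuation := by
  rw [norm_eq_zpow_neg_valuation hx0] at hx
  have hp : (1 : ℝ) < p := by exact_mod_cast (Fact.out : p.Prime).one_lt
  have := (zpow_lt_one_iff_right₀ hp).1 hx
  omega

theorem norm_mul_p_zpow_le {q : ℚ_[p]} (hq : ‖q‖ = 1) {j k : ℤ} (hjk : j ≤ k) :
    ‖q * (p : ℚ_[p]) ^ k‖ ≤ (p : ℝ) ^ (-j) := by
  rw [norm_mul, hq, one_mul, norm_p_zpow]
  exact zpow_le_zpow_right₀ (by exact_mod_cast (Fact.out : p.Prime).one_le) (neg_le_neg hjk)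

end Padic

theorem stmt_16_general (p : ℕ) [Fact p.Prime] (s : ℕ)
    (α : Fin s → ℚ_[p]) (hαE : ∀ i, ‖α i‖ < 1) (hα0 : ∀ i, α i ≠ 0)
    (jp : Fin s)
    (u v : ℚ) (hu : ‖(u : ℚ_[p])‖ = 1) (hv : ‖(v : ℚ_[p])‖ = 1)
    (u' : Fin s → ℚ) (hu' : ∀ i, ‖(u' i : ℚ_[p])‖ = 1)
    (w' : Fin s → ℚ) (hw' : ∀ i, ‖(w' i : ℚ_[p])‖ ≤ 1)
    (B : Matrix (Fin s) (Fin s) ℚ)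
    (hB1 : ∀ i j, ‖(B i j : ℚ_[p])‖ ≤ 1) (hB2 : ‖((B.det : ℚ) : ℚ_[p])‖ = 1)
    (γ : Fin s → ℚ) (hγ : ∀ i, ‖(γ i : ℚ_[p])‖ < 1)
    (Tinv : (Fin s → ℚ_[p]) → Fin s → ℚ_[p])
    (hTinvP : ∀ x, Tinv x jp =
      (u : ℚ_[p]) * (p : ℚ_[p]) ^ (α jp).valuation
        / ((∑ l, (B jp l : ℚ_[p]) * (x l - (γ l : ℚ_[p]))) + (v : ℚ_[p])))
    (hTinvN : ∀ x, ∀ i, i ≠ jp → Tinv x i =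
      (u' i : ℚ_[p]) * (p : ℚ_[p]) ^ (min ((α jp).valuation) ((α i).valuation))
        * ((∑ l, (B i l : ℚ_[p]) * (x l - (γ l : ℚ_[p]))) + (w' i : ℚ_[p]))
        / ((∑ l, (B jp l : ℚ_[p]) * (x l - (γ l : ℚ_[p]))) + (v : ℚ_[p]))) :
    (∀ x y : Fin s → ℚ_[p], (∀ i, ‖x i‖ < 1) → (∀ i, ‖y i‖ < 1) →
      ∀ i, ‖Tinv x i - Tinv y i‖ ≤
        (p : ℝ) ^ (-(Finset.univ.inf' ⟨jp, Finset.mem_univ jp⟩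
            (fun l => (α l).valuation)))
          * Finset.univ.sup' ⟨jp, Finset.mem_univ jp⟩ (fun l => ‖x l - y l‖)) ∧
    (1 ≤ Finset.univ.inf' ⟨jp, Finset.mem_univ jp⟩ (fun l => (α l).valuation)) ∧
    (∀ x y : Fin s → ℚ_[p], (∀ i, ‖x i‖ < 1) → (∀ i, ‖y i‖ < 1) →
      Finset.univ.sup' ⟨jp, Finset.mem_univ jp⟩
          (fun i => ‖(∑ l, (B i l : ℚ_[p]) * (x l - (γ l : ℚ_[p])))
            - (∑ l, (B i l : ℚ_[p]) * (y l - (γ l : ℚ_[p])))‖)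
        = Finset.univ.sup' ⟨jp, Finset.mem_univ jp⟩ (fun i => ‖x i - y i‖)) := by
  set J := univ.inf' ⟨jp, mem_univ jp⟩ fun l => (α l).valuation
  set A : Matrix (Fin s) (Fin s) ℚ_[p] := B.map (↑)
  set c : Fin s → ℚ_[p] := fun l => γ l
  have hA : ∀ i j, ‖A i j‖ ≤ 1 := hB1
  have hdet : ‖A.det‖ = 1 := by rw [← hB2, Rat.cast_det]
  have hE : ∀ z : Fin s → ℚ_[p], (∀ i, ‖z i‖ < 1) → ‖A *ᵥ (z - c)‖ < 1 := fun z hz =>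
    (A.norm_mulVec_le_of_norm_le_one hA _).trans_lt <| IsUltrametricDist.norm_sub_lt_one
      ((pi_norm_lt_iff one_pos).2 hz) ((pi_norm_lt_iff one_pos).2 hγ)
  have hden : ∀ z : Fin s → ℚ_[p], (∀ i, ‖z i‖ < 1) → ‖(A *ᵥ (z - c)) jp + v‖ = 1 := fun z hz =>
    IsUltrametricDist.norm_add_eq_one_of_norm_lt_one ((norm_le_pi_norm _ jp).trans_lt (hE z hz)) hv
  have hlip : ∀ x y i (w : ℚ_[p]), ‖((A *ᵥ (x - c)) i + w) - ((A *ᵥ (y - c)) i + w)‖ ≤ ‖x - y‖ :=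
    fun x y i w => by
      rw [add_sub_add_right_eq_sub, ← Pi.sub_apply]
      exact (norm_le_pi_norm _ i).trans (A.norm_mulVec_sub_sub_mulVec_sub_le hA x y c)
  refine ⟨fun x y hx hy i => ?_, le_inf' _ _ fun i _ =>
    Padic.one_le_valuation_of_norm_lt_one (hα0 i) (hαE i), fun x y _ _ => ?_⟩
  · refine le_of_le_of_eq (b := (p : ℝ) ^ (-J) * ‖x - y‖) ?_
      (congrArg _ (Pi.sup'_norm_eq_norm (x - y) jp).symm)
    rcases eq_or_ne jp i with rfl | hi
    · rw [hTinvP, hTinvP, div_eq_mul_one_div, div_eq_mul_one_div (_ * _)]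
      exact norm_mul_div_sub_mul_div_le (Padic.norm_mul_p_zpow_le hu (inf'_le _ (mem_univ _)))
        (hden x hx) (hden y hy) (by simp) (hlip x y jp v) (by simp)
    · rw [hTinvN x i hi.symm, hTinvN y i hi.symm, mul_div_assoc, mul_div_assoc]
      have hnum : ‖(A *ᵥ (x - c)) i + w' i‖ ≤ 1 := (IsUltrametricDist.norm_add_le_max _ _).trans
        (max_le ((norm_le_pi_norm _ i).trans (hE x hx).le) (hw' i))
      exact norm_mul_div_sub_mul_div_le (Padic.norm_mul_p_zpow_le (hu' i)
        (le_min (inf'_le _ (mem_univ _)) (inf'_le _ (mem_univ _)))) (hden x hx) (hden y hy) hnum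
        (hlip x y jp v) (hlip x y i (w' i))
  · exact (Pi.sup'_norm_eq_norm (A *ᵥ (x - c) - A *ᵥ (y - c)) jp).trans <|
      (congrArg norm (by rw [← mulVec_sub, sub_sub_sub_cancel_right])).trans <|
        (A.norm_mulVec_eq_of_norm_det_eq_one hA hdet _).trans (Pi.sup'_norm_eq_norm (x - y) jp).symm

/-- Lemma 5 of the paper: contraction property of the inverse c-map step on
`E = (pℤ_p)^s`.  If the pivot coordinate `α_{φ(α)}` is nonzero, then for all
`x, y ∈ E`, `|T⁻¹x − T⁻¹y|_p ≤ p^{−j}|x − y|_p` with `j = min_i ord_p(α_i)`;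
if the pivot coordinate were zero the inverse step `x ↦ A⁻¹(x − γ)` is an isometry. -/
theorem stmt_16 (p : ℕ) [Fact p.Prime] (s : ℕ) (hs : 0 < s)
    (α : Fin s → ℚ_[p]) (hαE : ∀ i, ‖α i‖ < 1) (hα0 : ∀ i, α i ≠ 0)
    (jp : Fin s)
    (u v : ℚ) (hu : ‖(u : ℚ_[p])‖ = 1) (hv : ‖(v : ℚ_[p])‖ = 1)
    (u' : Fin s → ℚ) (hu' : ∀ i, ‖(u' i : ℚ_[p])‖ = 1)
    (w' : Fin s → ℚ) (hw' : ∀ i, ‖(w' i : ℚ_[p])‖ ≤ 1)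
    (B : Matrix (Fin s) (Fin s) ℚ)
    (hB1 : ∀ i j, ‖(B i j : ℚ_[p])‖ ≤ 1) (hB2 : ‖((B.det : ℚ) : ℚ_[p])‖ = 1)
    (γ : Fin s → ℚ) (hγ : ∀ i, ‖(γ i : ℚ_[p])‖ < 1)
    (Tinv : (Fin s → ℚ_[p]) → Fin s → ℚ_[p])
    (hTinvP : ∀ x, Tinv x jp =
      (u : ℚ_[p]) * (p : ℚ_[p]) ^ (α jp).valuation
        / ((∑ l, (B jp l : ℚ_[p]) * (x l - (γ l : ℚ_[p]))) + (v : ℚ_[p])))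
    (hTinvN : ∀ x, ∀ i, i ≠ jp → Tinv x i =
      (u' i : ℚ_[p]) * (p : ℚ_[p]) ^ (min ((α jp).valuation) ((α i).valuation))
        * ((∑ l, (B i l : ℚ_[p]) * (x l - (γ l : ℚ_[p]))) + (w' i : ℚ_[p]))
        / ((∑ l, (B jp l : ℚ_[p]) * (x l - (γ l : ℚ_[p]))) + (v : ℚ_[p]))) :
    (∀ x y : Fin s → ℚ_[p], (∀ i, ‖x i‖ < 1) → (∀ i, ‖y i‖ < 1) →
      ∀ i, ‖Tinv x i - Tinv y i‖ ≤
        (p : ℝ) ^ (-(Finset.univ.inf' ⟨jp, Finset.mem_univ jp⟩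
            (fun l => (α l).valuation)))
          * Finset.univ.sup' ⟨jp, Finset.mem_univ jp⟩ (fun l => ‖x l - y l‖)) ∧
    (1 ≤ Finset.univ.inf' ⟨jp, Finset.mem_univ jp⟩ (fun l => (α l).valuation)) ∧
    (∀ x y : Fin s → ℚ_[p], (∀ i, ‖x i‖ < 1) → (∀ i, ‖y i‖ < 1) →
      Finset.univ.sup' ⟨jp, Finset.mem_univ jp⟩
          (fun i => ‖(∑ l, (B i l : ℚ_[p]) * (x l - (γ l : ℚ_[p])))
            - (∑ l, (B i l : ℚ_[p]) * (y l - (γ l : ℚ_[p])))‖)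
        = Finset.univ.sup' ⟨jp, Finset.mem_univ jp⟩ (fun i => ‖x i - y i‖)) :=
  stmt_16_general p s α hαE hα0 jp u v hu hv u' hu' w' hw' B hB1 hB2 γ hγ Tinv hTinvP hTinvN
end
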